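/- Suppose h : ℝ → ℝ satisfies h(T) ~ T, c ∈ (0,1), 0 < a + δ < 1, Λ₂ = c − ln(2π), J(T) = h(T)·ln h(T) + (c − ln(2π))·h(T) + c₀ + O((ln T)/T), and f(T) = (1−c)·h(T) + O(T^{a+δ}). Then J(T) = (1/(1−c))·f(T)·ln{(e^{Λ₂}/(1−c))·f(T)} + O(T^{a+δ}·ln T) as T → ∞. -/
import Mathlib


open Filter Asymptotics Real

lemma aux_abs_log_stmt15 (x : ℝ) (hx : 1/2 ≤ x) : |Real.log x| ≤ 2 * |x - 1| := by
  have hx0 : 0 < x := by linarith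
  rw [abs_le]
  constructor
  · have h1 : Real.log x⁻¹ ≤ x⁻¹ - 1 := Real.log_le_sub_one_of_pos (by positivity)
    rw [Real.log_inv] at h1
    have h2 : x⁻¹ - 1 = (1 - x) / x := by field_simp
    rw [h2] at h1
    have h3 : (1 - x) / x ≤ 2 * |x - 1| := by
      rw [div_le_iff₀ hx0]
      nlinarith [le_abs_self (1 - x), abs_sub_comm x 1,
        mul_nonneg (by linarith : (0:ℝ) ≤ 2*x - 1) (abs_nonneg (x - 1))]
    linarith
  · have h1 := Real.log_le_sub_one_of_pos hx0
    have h2 := le_abs_self (x - 1)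
    have h3 := abs_nonneg (x - 1)
    linarith

/-- the nonlinear generation formula (Theorem 3 of the paper). -/
theorem stmt_15
    (J f h : ℝ → ℝ) (a δ c c₀ Λ₂ : ℝ)
    (hh : Tendsto (fun T : ℝ => h T / T) atTop (nhds 1))
    (hc : c ∈ Set.Ioo (0 : ℝ) 1) (had : 0 < a + δ) (had1 : a + δ < 1)
    (hΛ : Λ₂ = c - Real.log (2 * π))
    (hJ : (fun T : ℝ =>
        J T - (h T * Real.log (h T) + (c - Real.log (2 * π)) * h T + c₀))
        =O[atTop] fun T : ℝ => Real.log T / T)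
    (hf : (fun T : ℝ => f T - (1 - c) * h T) =O[atTop] fun T : ℝ => T ^ (a + δ)) :
    (fun T : ℝ =>
        J T - (1 / (1 - c)) * f T *
          Real.log (Real.exp Λ₂ / (1 - c) * f T))
      =O[atTop] fun T : ℝ => T ^ (a + δ) * Real.log T := by
  obtain ⟨hc0, hc1⟩ := hc
  have h1c : (0:ℝ) < 1 - c := by linarith
  rw [isBigO_iff] at hJ hf ⊢
  obtain ⟨C₁, hC₁⟩ := hJ
  obtain ⟨C₂, hC₂⟩ := hf
  set C₁' : ℝ := max C₁ 0 with hC₁'def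
  set C₃ : ℝ := (max C₂ 0 + 1) / (1 - c) with hC₃def
  have hC₁'nn : 0 ≤ C₁' := le_max_right _ _
  have hC₃pos : 0 < C₃ := by positivity
  refine ⟨C₁' + 4*C₃ + (|Λ₂|) * C₃ + (|c₀|), ?_⟩
  have E3 : ∀ᶠ T in atTop, |h T / T - 1| < 1/2 := by
    have := Metric.tendsto_nhds.mp hh (1/2) (by norm_num)
    simpa [Real.dist_eq] using this
  have E4 : ∀ᶠ T in atTop, C₃ * T ^ (a + δ - 1) < 1/8 := by
    have h0 : Tendsto (fun T : ℝ => C₃ * T ^ (a + δ - 1)) atTop (nhds (C₃ * 0)) := by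
      refine Tendsto.const_mul C₃ ?_
      have := tendsto_rpow_neg_atTop (by linarith : (0:ℝ) < 1 - (a + δ))
      simpa [show -(1 - (a + δ)) = a + δ - 1 by ring] using this
    rw [mul_zero] at h0
    exact h0.eventually_lt_const (by norm_num)
  filter_upwards [hC₁, hC₂, E3, E4, eventually_ge_atTop (4:ℝ),
    eventually_ge_atTop (Real.exp 1)] with T hAT hfT hE3 hE4 hT4 hTe
  have hT0 : (0:ℝ) < T := by linarith
  have hT1 : (1:ℝ) ≤ T := by linarith
  have hlogT : 1 ≤ Real.log T := by
    have := Real.log_le_log (Real.exp_pos 1) hTe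
    rwa [Real.log_exp] at this
  have hp0 : 0 < T ^ (a + δ) := Real.rpow_pos_of_pos hT0 _
  have hp1 : 1 ≤ T ^ (a + δ) := by
    calc (1:ℝ) = 1 ^ (a + δ) := (Real.one_rpow _).symm
    _ ≤ T ^ (a + δ) := Real.rpow_le_rpow zero_le_one hT1 had.le
  -- bounds on h
  have hhub : h T < 3/2 * T := by
    have := (abs_lt.mp hE3).2
    have h1 : h T / T < 3/2 := by linarith
    rw [div_lt_iff₀ hT0] at h1; linarith
  have hhlb : T/2 < h T := by
    have := (abs_lt.mp hE3).1
    have h1 : 1/2 < h T / T := by linarith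
    rw [lt_div_iff₀ hT0] at h1; linarith
  -- C₃ T^(a+δ) ≤ T/8
  have hE4' : C₃ * T ^ (a + δ) ≤ T / 8 := by
    have heq : T ^ (a + δ) = T ^ (a + δ - 1) * T := by
      rw [← Real.rpow_add_one hT0.ne' (a + δ - 1)]; ring_nf
    rw [heq]
    calc C₃ * (T ^ (a + δ - 1) * T) = (C₃ * T ^ (a + δ - 1)) * T := by ring
    _ ≤ (1/8) * T := mul_le_mul_of_nonneg_right hE4.le hT0.le
    _ = T / 8 := by ring
  set G : ℝ := f T / (1 - c) with hGdef
  -- |G - h T| ≤ C₃ T^(a+δ)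
  have hGh : |G - h T| ≤ C₃ * T ^ (a + δ) := by
    rw [Real.norm_eq_abs, Real.norm_eq_abs, abs_of_pos hp0] at hfT
    have h2 : (1 - c) * (G - h T) = f T - (1 - c) * h T := by
      rw [hGdef]; field_simp
    have h3 : |G - h T| = |f T - (1 - c) * h T| / (1 - c) := by
      rw [← h2, abs_mul, abs_of_pos h1c, mul_div_cancel_left₀ _ h1c.ne']
    rw [h3, div_le_iff₀ h1c]
    calc |f T - (1 - c) * h T| ≤ C₂ * T ^ (a + δ) := hfT
    _ ≤ (max C₂ 0 + 1) * T ^ (a + δ) := by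
        apply mul_le_mul_of_nonneg_right _ hp0.le
        have := le_max_left C₂ (0:ℝ); linarith
    _ = C₃ * T ^ (a + δ) * (1 - c) := by
        rw [hC₃def]; field_simp
  have hGh8 : |G - h T| ≤ T / 8 := hGh.trans hE4'
  obtain ⟨hGh8l, hGh8r⟩ := abs_le.mp hGh8
  have hG0 : 0 < G := by linarith
  have hh0 : 0 < h T := by linarith
  have hh1 : 1 ≤ h T := by linarith
  -- |log h| ≤ 2 log T
  have hlogh : |Real.log (h T)| ≤ 2 * Real.log T := by
    rw [abs_of_nonneg (Real.log_nonneg hh1)]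
    calc Real.log (h T) ≤ Real.log (2 * T) := Real.log_le_log hh0 (by linarith)
    _ = Real.log 2 + Real.log T := Real.log_mul two_ne_zero hT0.ne'
    _ ≤ 2 * Real.log T := by
        have h2 : Real.log 2 ≤ 1 := by
          have := Real.log_le_sub_one_of_pos (by norm_num : (0:ℝ) < 2); linarith
        linarith
  -- |G * (log h - log G)| ≤ 2 C₃ T^(a+δ)
  have hC : |G * (Real.log (h T) - Real.log G)| ≤ 2 * (C₃ * T ^ (a + δ)) := by
    have hdiv : Real.log (h T) - Real.log G = Real.log (h T / G) :=
      (Real.log_div hh0.ne' hG0.ne').symm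
    have hratio : 1/2 ≤ h T / G := by
      rw [le_div_iff₀ hG0]; linarith
    have hkey := aux_abs_log_stmt15 _ hratio
    have heq1 : h T / G - 1 = (h T - G) / G := by field_simp
    rw [hdiv, abs_mul, abs_of_pos hG0]
    calc G * |Real.log (h T / G)| ≤ G * (2 * |(h T - G) / G|) := by
          apply mul_le_mul_of_nonneg_left _ hG0.le
          rw [← heq1]; exact hkey
    _ = 2 * |h T - G| := by
          rw [abs_div, abs_of_pos hG0]; field_simp
    _ ≤ 2 * (C₃ * T ^ (a + δ)) := by
          rw [abs_sub_comm]; linarith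
  -- the algebraic identity
  have hG0' : Real.exp Λ₂ * G ≠ 0 := by positivity
  have hid : J T - (1 / (1 - c)) * f T * Real.log (Real.exp Λ₂ / (1 - c) * f T)
      = (J T - (h T * Real.log (h T) + (c - Real.log (2 * π)) * h T + c₀))
        + (h T - G) * Real.log (h T)
        + G * (Real.log (h T) - Real.log G)
        + Λ₂ * (h T - G) + c₀ := by
    have e1 : 1 / (1 - c) * f T = G := by rw [hGdef]; ring
    have e2 : Real.exp Λ₂ / (1 - c) * f T = Real.exp Λ₂ * G := by rw [hGdef]; ring
    rw [e1, e2, Real.log_mul (Real.exp_ne_zero _) hG0.ne', Real.log_exp, hΛ]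
    ring
  set P : ℝ := T ^ (a + δ) * Real.log T with hPdef
  have hP1 : 1 ≤ P := by
    calc (1:ℝ) = 1 * 1 := by ring
    _ ≤ T ^ (a + δ) * Real.log T := mul_le_mul hp1 hlogT zero_le_one hp0.le
  have hP0 : 0 < P := by linarith
  -- individual bounds
  have bA : |J T - (h T * Real.log (h T) + (c - Real.log (2 * π)) * h T + c₀)|
      ≤ C₁' * P := by
    rw [Real.norm_eq_abs, Real.norm_eq_abs] at hAT
    have hlt : |Real.log T / T| ≤ P := by
      rw [abs_of_nonneg (by positivity)]
      calc Real.log T / T ≤ Real.log T := by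
            apply div_le_self (by linarith) hT1
      _ ≤ P := le_mul_of_one_le_left (by linarith) hp1
    calc |J T - (h T * Real.log (h T) + (c - Real.log (2 * π)) * h T + c₀)|
        ≤ C₁ * |Real.log T / T| := hAT
    _ ≤ C₁' * P := by
        apply mul_le_mul (le_max_left _ _) hlt (abs_nonneg _) hC₁'nn
  have bB : |(h T - G) * Real.log (h T)| ≤ 2 * C₃ * P := by
    rw [abs_mul]
    calc |h T - G| * |Real.log (h T)| ≤ (C₃ * T ^ (a + δ)) * (2 * Real.log T) := by
          apply mul_le_mul _ hlogh (abs_nonneg _) (by positivity)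
          rw [abs_sub_comm]; exact hGh
    _ = 2 * C₃ * P := by rw [hPdef]; ring
  have bC : |G * (Real.log (h T) - Real.log G)| ≤ 2 * C₃ * P := by
    calc |G * (Real.log (h T) - Real.log G)| ≤ 2 * (C₃ * T ^ (a + δ)) := hC
    _ = 2 * C₃ * T ^ (a + δ) := by ring
    _ ≤ 2 * C₃ * P := by
        rw [hPdef]
        exact mul_le_mul_of_nonneg_left (le_mul_of_one_le_right hp0.le hlogT)
          (by positivity)
  have bD : |Λ₂ * (h T - G)| ≤ |Λ₂| * C₃ * P := by
    rw [abs_mul]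
    calc |Λ₂| * |h T - G| ≤ |Λ₂| * (C₃ * T ^ (a + δ)) := by
          apply mul_le_mul_of_nonneg_left _ (abs_nonneg _)
          rw [abs_sub_comm]; exact hGh
    _ = |Λ₂| * C₃ * T ^ (a + δ) := by ring
    _ ≤ |Λ₂| * C₃ * P := by
        rw [hPdef]
        exact mul_le_mul_of_nonneg_left (le_mul_of_one_le_right hp0.le hlogT)
          (by positivity)
  have bE : |c₀| ≤ |c₀| * P := le_mul_of_one_le_right (abs_nonneg _) hP1
  -- assemble
  rw [Real.norm_eq_abs, Real.norm_eq_abs, hid, abs_of_pos hP0]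
  calc |(J T - (h T * Real.log (h T) + (c - Real.log (2 * π)) * h T + c₀))
        + (h T - G) * Real.log (h T)
        + G * (Real.log (h T) - Real.log G)
        + Λ₂ * (h T - G) + c₀|
      ≤ |J T - (h T * Real.log (h T) + (c - Real.log (2 * π)) * h T + c₀)|
        + |(h T - G) * Real.log (h T)|
        + |G * (Real.log (h T) - Real.log G)|
        + |Λ₂ * (h T - G)| + |c₀| := by
        apply (abs_add_le _ _).trans
        gcongr
        apply (abs_add_le _ _).trans
        gcongr
        apply (abs_add_le _ _).trans
        gcongr
        exact abs_add_le _ _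
  _ ≤ C₁' * P + 2 * C₃ * P + 2 * C₃ * P + |Λ₂| * C₃ * P + |c₀| * P := by
        linarith
  _ = (C₁' + 4*C₃ + (|Λ₂|) * C₃ + (|c₀|)) * P := by ring
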